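/- Let f: H² → H² be holomorphic and define φ, a by φe = f*e, a = f*Γ - Γ. Then the curvature of the pulled-back Cartan gauge potential f*Â = (a+Γ)t₀ + (1/(2i))(φ e t₋ - φ̄ ē t₊) vanishes if and only if the hyperbolic vortex equations ∂_z̄φ - i a_z̄ φ = 0 and da = (|φ|²-1)dΓ hold. -/

import Mathlib

open Complex Matrix

noncomputable def τ1 : Matrix (Fin 2) (Fin 2) ℂ := !![0, 1; 1, 0]
noncomputable def τ2 : Matrix (Fin 2) (Fin 2) ℂ := !![0, -Complex.I; Complex.I, 0]
noncomputable def τ3 : Matrix (Fin 2) (Fin 2) ℂ := !![1, 0; 0, -1]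

noncomputable def t0 : Matrix (Fin 2) (Fin 2) ℂ := (Complex.I / 2) • τ3
noncomputable def tplus : Matrix (Fin 2) (Fin 2) ℂ :=
  (-(1 : ℂ) / 2) • τ2 + Complex.I • (((1 : ℂ) / 2) • τ1)
noncomputable def tminus : Matrix (Fin 2) (Fin 2) ℂ :=
  (-(1 : ℂ) / 2) • τ2 - Complex.I • (((1 : ℂ) / 2) • τ1)

noncomputable def wderiv (f : ℂ → ℂ) (z : ℂ) : ℂ :=
  (fderiv ℝ f z 1 - Complex.I * fderiv ℝ f z Complex.I) / 2

noncomputable def wderivBar (f : ℂ → ℂ) (z : ℂ) : ℂ :=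
  (fderiv ℝ f z 1 + Complex.I * fderiv ℝ f z Complex.I) / 2

noncomputable def mwderiv (S : ℂ → Matrix (Fin 2) (Fin 2) ℂ) (z : ℂ) :
    Matrix (Fin 2) (Fin 2) ℂ :=
  Matrix.of fun i j => wderiv (fun w => S w i j) z

noncomputable def mwderivBar (S : ℂ → Matrix (Fin 2) (Fin 2) ℂ) (z : ℂ) :
    Matrix (Fin 2) (Fin 2) ℂ :=
  Matrix.of fun i j => wderivBar (fun w => S w i j) z

noncomputable def eZ (z : ℂ) : ℂ := 2 / (1 - (‖z‖ : ℂ) ^ 2)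
noncomputable def eBarZbar (z : ℂ) : ℂ := 2 / (1 - (‖z‖ : ℂ) ^ 2)
noncomputable def GammaZ (z : ℂ) : ℂ :=
  Complex.I * (starRingEnd ℂ) z / (1 - (‖z‖ : ℂ) ^ 2)
noncomputable def GammaZbar (z : ℂ) : ℂ := -Complex.I * z / (1 - (‖z‖ : ℂ) ^ 2)

lemma wd_add {f g : ℂ → ℂ} {z : ℂ} (hf : DifferentiableAt ℝ f z)
    (hg : DifferentiableAt ℝ g z) :
    wderiv (fun w => f w + g w) z = wderiv f z + wderiv g z := by
  simp only [wderiv, fderiv_fun_add hf hg, ContinuousLinearMap.add_apply]; ring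

lemma wdb_add {f g : ℂ → ℂ} {z : ℂ} (hf : DifferentiableAt ℝ f z)
    (hg : DifferentiableAt ℝ g z) :
    wderivBar (fun w => f w + g w) z = wderivBar f z + wderivBar g z := by
  simp only [wderivBar, fderiv_fun_add hf hg, ContinuousLinearMap.add_apply]; ring

lemma wd_neg (f : ℂ → ℂ) (z : ℂ) :
    wderiv (fun w => -f w) z = -wderiv f z := by
  simp only [wderiv, fderiv_fun_neg, ContinuousLinearMap.neg_apply]; ring

lemma wdb_neg (f : ℂ → ℂ) (z : ℂ) :
    wderivBar (fun w => -f w) z = -wderivBar f z := by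
  simp only [wderivBar, fderiv_fun_neg, ContinuousLinearMap.neg_apply]; ring

lemma wd_sub {f g : ℂ → ℂ} {z : ℂ} (hf : DifferentiableAt ℝ f z)
    (hg : DifferentiableAt ℝ g z) :
    wderiv (fun w => f w - g w) z = wderiv f z - wderiv g z := by
  simp only [wderiv, fderiv_fun_sub hf hg, ContinuousLinearMap.sub_apply]; ring

lemma wdb_sub {f g : ℂ → ℂ} {z : ℂ} (hf : DifferentiableAt ℝ f z)
    (hg : DifferentiableAt ℝ g z) :
    wderivBar (fun w => f w - g w) z = wderivBar f z - wderivBar g z := by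
  simp only [wderivBar, fderiv_fun_sub hf hg, ContinuousLinearMap.sub_apply]; ring

lemma wd_mul {f g : ℂ → ℂ} {z : ℂ} (hf : DifferentiableAt ℝ f z)
    (hg : DifferentiableAt ℝ g z) :
    wderiv (fun w => f w * g w) z = wderiv f z * g z + f z * wderiv g z := by
  simp only [wderiv, fderiv_fun_mul hf hg, ContinuousLinearMap.add_apply,
    ContinuousLinearMap.smul_apply, smul_eq_mul]; ring

lemma wdb_mul {f g : ℂ → ℂ} {z : ℂ} (hf : DifferentiableAt ℝ f z)
    (hg : DifferentiableAt ℝ g z) :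
    wderivBar (fun w => f w * g w) z = wderivBar f z * g z + f z * wderivBar g z := by
  simp only [wderivBar, fderiv_fun_mul hf hg, ContinuousLinearMap.add_apply,
    ContinuousLinearMap.smul_apply, smul_eq_mul]; ring

lemma wd_const (c : ℂ) (z : ℂ) : wderiv (fun _ => c) z = 0 := by
  simp [wderiv, fderiv_const]

lemma wdb_const (c : ℂ) (z : ℂ) : wderivBar (fun _ => c) z = 0 := by
  simp [wderivBar, fderiv_const]

lemma wd_const_mul {f : ℂ → ℂ} {z : ℂ} (hf : DifferentiableAt ℝ f z) (c : ℂ) :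
    wderiv (fun w => c * f w) z = c * wderiv f z := by
  rw [wd_mul (differentiableAt_const c) hf, wd_const]; ring

lemma wdb_const_mul {f : ℂ → ℂ} {z : ℂ} (hf : DifferentiableAt ℝ f z) (c : ℂ) :
    wderivBar (fun w => c * f w) z = c * wderivBar f z := by
  rw [wdb_mul (differentiableAt_const c) hf, wdb_const]; ring

lemma wd_mul_const {f : ℂ → ℂ} {z : ℂ} (hf : DifferentiableAt ℝ f z) (c : ℂ) :
    wderiv (fun w => f w * c) z = wderiv f z * c := by
  rw [wd_mul hf (differentiableAt_const c), wd_const]; ring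

lemma wdb_mul_const {f : ℂ → ℂ} {z : ℂ} (hf : DifferentiableAt ℝ f z) (c : ℂ) :
    wderivBar (fun w => f w * c) z = wderivBar f z * c := by
  rw [wdb_mul hf (differentiableAt_const c), wdb_const]; ring

lemma wd_id (z : ℂ) : wderiv (fun w => w) z = 1 := by
  have : fderiv ℝ (fun w : ℂ => w) z = ContinuousLinearMap.id ℝ ℂ := fderiv_id'
  simp only [wderiv, this, ContinuousLinearMap.id_apply]
  linear_combination (-1/2 : ℂ) * Complex.I_mul_I

lemma wdb_id (z : ℂ) : wderivBar (fun w => w) z = 0 := by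
  have : fderiv ℝ (fun w : ℂ => w) z = ContinuousLinearMap.id ℝ ℂ := fderiv_id'
  simp only [wderivBar, this, ContinuousLinearMap.id_apply]
  linear_combination (1/2 : ℂ) * Complex.I_mul_I

lemma diffAt_conj_comp {g : ℂ → ℂ} {z : ℂ} (h : DifferentiableAt ℝ g z) :
    DifferentiableAt ℝ (fun w => (starRingEnd ℂ) (g w)) z := by
  have he : (fun w => (starRingEnd ℂ) (g w)) = (⇑Complex.conjCLE ∘ g) := by
    funext w; simp [Complex.conjCLE_apply]
  rw [he]
  exact Complex.conjCLE.differentiable.differentiableAt.comp z h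

lemma fderiv_conj_comp (f : ℂ → ℂ) (z v : ℂ) :
    fderiv ℝ (fun w => (starRingEnd ℂ) (f w)) z v = (starRingEnd ℂ) (fderiv ℝ f z v) := by
  have he : (fun w => (starRingEnd ℂ) (f w)) = (⇑Complex.conjCLE ∘ f) := by
    funext w; simp [Complex.conjCLE_apply]
  rw [he, Complex.conjCLE.comp_fderiv]
  simp [Complex.conjCLE_apply]

lemma wd_conj (f : ℂ → ℂ) (z : ℂ) :
    wderiv (fun w => (starRingEnd ℂ) (f w)) z = (starRingEnd ℂ) (wderivBar f z) := by
  simp only [wderiv, wderivBar, fderiv_conj_comp, map_div₀, map_add, _root_.map_mul,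
    Complex.conj_I, map_ofNat]
  ring

lemma wdb_conj (f : ℂ → ℂ) (z : ℂ) :
    wderivBar (fun w => (starRingEnd ℂ) (f w)) z = (starRingEnd ℂ) (wderiv f z) := by
  simp only [wderiv, wderivBar, fderiv_conj_comp, map_div₀, map_sub, _root_.map_mul,
    Complex.conj_I, map_ofNat]
  ring

lemma wd_inv {f : ℂ → ℂ} {z : ℂ} (hf : DifferentiableAt ℝ f z) (h0 : f z ≠ 0) :
    wderiv (fun w => (f w)⁻¹) z = -wderiv f z / (f z) ^ 2 := by
  have h := ((hasFDerivAt_inv' (𝕜 := ℝ) h0).comp z hf.hasFDerivAt).fderiv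
  have h' : (fun w => (f w)⁻¹) = Inv.inv ∘ f := rfl
  rw [h']
  simp only [wderiv, h, ContinuousLinearMap.coe_comp', Function.comp_apply,
    ContinuousLinearMap.neg_apply, ContinuousLinearMap.mulLeftRight_apply]
  field_simp
  ring

lemma wdb_inv {f : ℂ → ℂ} {z : ℂ} (hf : DifferentiableAt ℝ f z) (h0 : f z ≠ 0) :
    wderivBar (fun w => (f w)⁻¹) z = -wderivBar f z / (f z) ^ 2 := by
  have h := ((hasFDerivAt_inv' (𝕜 := ℝ) h0).comp z hf.hasFDerivAt).fderiv
  have h' : (fun w => (f w)⁻¹) = Inv.inv ∘ f := rfl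
  rw [h']
  simp only [wderivBar, h, ContinuousLinearMap.coe_comp', Function.comp_apply,
    ContinuousLinearMap.neg_apply, ContinuousLinearMap.mulLeftRight_apply]
  field_simp
  ring

lemma cast_abs_sq (z : ℂ) : ((‖z‖ : ℂ)) ^ 2 = z * (starRingEnd ℂ) z := by
  rw [← Complex.ofReal_pow, Complex.sq_norm, Complex.mul_conj]

lemma one_sub_ne {z : ℂ} (h : ‖z‖ < 1) :
    (1 : ℂ) - z * (starRingEnd ℂ) z ≠ 0 := by
  rw [← cast_abs_sq, ← Complex.ofReal_pow, ← Complex.ofReal_one, ← Complex.ofReal_sub]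
  rw [Complex.ofReal_ne_zero]
  nlinarith [norm_nonneg z]

lemma diffAt_denom (z : ℂ) :
    DifferentiableAt ℝ (fun w : ℂ => 1 - w * (starRingEnd ℂ) w) z :=
  (differentiableAt_const 1).sub
    (differentiableAt_fun_id.fun_mul (diffAt_conj_comp differentiableAt_fun_id))

lemma wd_denom (z : ℂ) :
    wderiv (fun w : ℂ => 1 - w * (starRingEnd ℂ) w) z = -((starRingEnd ℂ) z) := by
  rw [wd_sub (differentiableAt_const 1)
    (differentiableAt_fun_id.fun_mul (diffAt_conj_comp differentiableAt_fun_id)), wd_const,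
    wd_mul differentiableAt_fun_id (diffAt_conj_comp differentiableAt_fun_id),
    wd_id, wd_conj, wdb_id]
  simp

lemma wdb_denom (z : ℂ) :
    wderivBar (fun w : ℂ => 1 - w * (starRingEnd ℂ) w) z = -z := by
  rw [wdb_sub (differentiableAt_const 1)
    (differentiableAt_fun_id.fun_mul (diffAt_conj_comp differentiableAt_fun_id)), wdb_const,
    wdb_mul differentiableAt_fun_id (diffAt_conj_comp differentiableAt_fun_id),
    wdb_id, wdb_conj, wd_id]
  simp

lemma diffAt_denom_inv {z : ℂ} (h : ‖z‖ < 1) :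
    DifferentiableAt ℝ (fun w : ℂ => (1 - w * (starRingEnd ℂ) w)⁻¹) z :=
  (diffAt_denom z).inv (one_sub_ne h)

lemma wd_denom_inv {z : ℂ} (h : ‖z‖ < 1) :
    wderiv (fun w : ℂ => (1 - w * (starRingEnd ℂ) w)⁻¹) z =
      (starRingEnd ℂ) z / (1 - z * (starRingEnd ℂ) z) ^ 2 := by
  rw [wd_inv (diffAt_denom z) (one_sub_ne h), wd_denom]
  ring

lemma wdb_denom_inv {z : ℂ} (h : ‖z‖ < 1) :
    wderivBar (fun w : ℂ => (1 - w * (starRingEnd ℂ) w)⁻¹) z =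
      z / (1 - z * (starRingEnd ℂ) z) ^ 2 := by
  rw [wdb_inv (diffAt_denom z) (one_sub_ne h), wdb_denom]
  ring

lemma eZ_eq : eZ = fun w => 2 * (1 - w * (starRingEnd ℂ) w)⁻¹ := by
  funext w; rw [eZ, cast_abs_sq, div_eq_mul_inv]

lemma GammaZ_eq : GammaZ = fun w => (Complex.I * (starRingEnd ℂ) w) *
    (1 - w * (starRingEnd ℂ) w)⁻¹ := by
  funext w; rw [GammaZ, cast_abs_sq, div_eq_mul_inv]

lemma GammaZbar_eq : GammaZbar = fun w => (-Complex.I * w) *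
    (1 - w * (starRingEnd ℂ) w)⁻¹ := by
  funext w; rw [GammaZbar, cast_abs_sq, div_eq_mul_inv]

lemma diffAt_eZ {z : ℂ} (h : ‖z‖ < 1) : DifferentiableAt ℝ eZ z := by
  rw [eZ_eq]; exact (differentiableAt_const 2).mul (diffAt_denom_inv h)

lemma diffAt_GammaZ {z : ℂ} (h : ‖z‖ < 1) : DifferentiableAt ℝ GammaZ z := by
  rw [GammaZ_eq]
  exact ((differentiableAt_const _).mul (diffAt_conj_comp differentiableAt_fun_id)).mul
    (diffAt_denom_inv h)

lemma diffAt_GammaZbar {z : ℂ} (h : ‖z‖ < 1) : DifferentiableAt ℝ GammaZbar z := by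
  rw [GammaZbar_eq]
  exact ((differentiableAt_const _).mul differentiableAt_fun_id).mul (diffAt_denom_inv h)

lemma eZ_val {z : ℂ} : eZ z = 2 * (1 - z * (starRingEnd ℂ) z)⁻¹ := by rw [eZ_eq]

lemma GammaZ_val {z : ℂ} : GammaZ z =
    (Complex.I * (starRingEnd ℂ) z) * (1 - z * (starRingEnd ℂ) z)⁻¹ := by rw [GammaZ_eq]

lemma GammaZbar_val {z : ℂ} : GammaZbar z =
    (-Complex.I * z) * (1 - z * (starRingEnd ℂ) z)⁻¹ := by rw [GammaZbar_eq]

lemma wd_eZ {z : ℂ} (h : ‖z‖ < 1) :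
    wderiv eZ z = 2 * (starRingEnd ℂ) z * ((1 - z * (starRingEnd ℂ) z)⁻¹ *
      (1 - z * (starRingEnd ℂ) z)⁻¹) := by
  rw [eZ_eq, wd_const_mul (diffAt_denom_inv h), wd_denom_inv h]
  field_simp

lemma wdb_eZ {z : ℂ} (h : ‖z‖ < 1) :
    wderivBar eZ z = 2 * z * ((1 - z * (starRingEnd ℂ) z)⁻¹ *
      (1 - z * (starRingEnd ℂ) z)⁻¹) := by
  rw [eZ_eq, wdb_const_mul (diffAt_denom_inv h), wdb_denom_inv h]
  field_simp

lemma wdb_GammaZ {z : ℂ} (h : ‖z‖ < 1) :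
    wderivBar GammaZ z = Complex.I * ((1 - z * (starRingEnd ℂ) z)⁻¹ *
      (1 - z * (starRingEnd ℂ) z)⁻¹) := by
  have hd1 : DifferentiableAt ℝ (fun w : ℂ => Complex.I * (starRingEnd ℂ) w) z :=
    (differentiableAt_const _).mul (diffAt_conj_comp differentiableAt_fun_id)
  rw [GammaZ_eq, wdb_mul hd1 (diffAt_denom_inv h), wdb_denom_inv h,
    wdb_const_mul (diffAt_conj_comp differentiableAt_fun_id), wdb_conj, wd_id]
  have hr := one_sub_ne h
  simp only [map_one]
  field_simp
  ring

lemma wd_GammaZbar {z : ℂ} (h : ‖z‖ < 1) :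
    wderiv GammaZbar z = -(Complex.I * ((1 - z * (starRingEnd ℂ) z)⁻¹ *
      (1 - z * (starRingEnd ℂ) z)⁻¹)) := by
  have hd1 : DifferentiableAt ℝ (fun w : ℂ => -Complex.I * w) z :=
    (differentiableAt_const _).mul differentiableAt_fun_id
  rw [GammaZbar_eq, wd_mul hd1 (diffAt_denom_inv h), wd_denom_inv h,
    wd_const_mul differentiableAt_fun_id, wd_id]
  have hr := one_sub_ne h
  field_simp
  ring

lemma conj_GammaZ (w : ℂ) : (starRingEnd ℂ) (GammaZ w) = GammaZbar w := by
  rw [GammaZ_eq, GammaZbar_eq]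
  simp only [_root_.map_mul, map_inv₀, map_sub, _root_.map_one, Complex.conj_I, Complex.conj_conj]
  ring

lemma t0_eq : t0 = !![Complex.I/2, 0; 0, -(Complex.I/2)] := by
  ext i j
  fin_cases i <;> fin_cases j <;> simp [t0, τ3]

lemma tplus_eq : tplus = !![0, Complex.I; 0, 0] := by
  ext i j
  fin_cases i <;> fin_cases j <;> simp [tplus, τ1, τ2] <;> ring

lemma tminus_eq : tminus = !![0, 0; -Complex.I, 0] := by
  ext i j
  fin_cases i <;> fin_cases j <;> simp [tminus, τ1, τ2] <;> ring

lemma mwderiv_comb {g h : ℂ → ℂ} {M N : Matrix (Fin 2) (Fin 2) ℂ} {z : ℂ}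
    (hg : DifferentiableAt ℝ g z) (hh : DifferentiableAt ℝ h z) :
    mwderiv (fun w => g w • M + h w • N) z = wderiv g z • M + wderiv h z • N := by
  ext i j
  simp only [mwderiv, Matrix.of_apply, Matrix.add_apply, Matrix.smul_apply, smul_eq_mul]
  rw [wd_add (hg.mul_const _) (hh.mul_const _), wd_mul_const hg, wd_mul_const hh]

lemma mwderivBar_comb {g h : ℂ → ℂ} {M N : Matrix (Fin 2) (Fin 2) ℂ} {z : ℂ}
    (hg : DifferentiableAt ℝ g z) (hh : DifferentiableAt ℝ h z) :
    mwderivBar (fun w => g w • M + h w • N) z = wderivBar g z • M + wderivBar h z • N := by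
  ext i j
  simp only [mwderivBar, Matrix.of_apply, Matrix.add_apply, Matrix.smul_apply, smul_eq_mul]
  rw [wdb_add (hg.mul_const _) (hh.mul_const _), wdb_mul_const hg, wdb_mul_const hh]

lemma eBarZbar_eq : eBarZbar = eZ := rfl

lemma conj_GammaZbar (w : ℂ) : (starRingEnd ℂ) (GammaZbar w) = GammaZ w := by
  rw [← conj_GammaZ, Complex.conj_conj]

lemma cast_one_sub_abs (w : ℂ) :
    ((1 - ‖w‖ ^ 2 : ℝ) : ℂ) = 1 - w * (starRingEnd ℂ) w := by
  push_cast
  rw [cast_abs_sq]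


/-- For holomorphic f : H² → H² with φ, a defined by φe = f*e and a = f*Γ - Γ,
the curvature of the pulled-back Cartan gauge potential
f*Â = (a+Γ)t₀ + (1/(2i))(φet₋ - φ̄ēt₊) vanishes if and only if the hyperbolic vortex
equations ∂_z̄φ - i a_z̄φ = 0 and da = (|φ|²-1)dΓ hold (as dz∧dz̄ coefficients). -/
theorem pulled_back_cartan_flat_iff_vortex
    (f : ℂ → ℂ)
    (hf : DifferentiableOn ℂ f {z : ℂ | ‖z‖ < 1})
    (hmap : ∀ z : ℂ, ‖z‖ < 1 → ‖f z‖ < 1)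
    (φ az azbar : ℂ → ℂ)
    (hφ : ∀ z : ℂ, φ z =
      (((1 - ‖z‖ ^ 2 : ℝ) : ℂ) / ((1 - ‖f z‖ ^ 2 : ℝ) : ℂ)) * deriv f z)
    (haz : ∀ z : ℂ, az z = GammaZ (f z) * deriv f z - GammaZ z)
    (hazbar : ∀ z : ℂ, azbar z = GammaZbar (f z) * (starRingEnd ℂ) (deriv f z) - GammaZbar z)
    (AfZ AfZbar : ℂ → Matrix (Fin 2) (Fin 2) ℂ)
    (hAfZ : ∀ z : ℂ, AfZ z = (az z + GammaZ z) • t0 +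
      ((1 : ℂ) / (2 * Complex.I)) • ((φ z * eZ z) • tminus))
    (hAfZbar : ∀ z : ℂ, AfZbar z = (azbar z + GammaZbar z) • t0 -
      ((1 : ℂ) / (2 * Complex.I)) • (((starRingEnd ℂ) (φ z) * eBarZbar z) • tplus)) :
    ∀ z : ℂ, ‖z‖ < 1 →
      (mwderiv AfZbar z - mwderivBar AfZ z + (AfZ z * AfZbar z - AfZbar z * AfZ z) = 0 ↔
        (wderivBar φ z - Complex.I * azbar z * φ z = 0 ∧
          wderiv azbar z - wderivBar az z =
            ((‖φ z‖ : ℂ) ^ 2 - 1) * (wderiv GammaZbar z - wderivBar GammaZ z))) := by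
  intro z hz
  have hopen : IsOpen {w : ℂ | ‖w‖ < 1} := by
    have : {w : ℂ | ‖w‖ < 1} = Metric.ball (0:ℂ) 1 := by
      ext w; simp [Metric.mem_ball, Complex.dist_eq]
    rw [this]; exact Metric.isOpen_ball
  have hfa := hf.analyticOnNhd hopen
  have hfz : DifferentiableAt ℝ f z := ((hfa z hz).differentiableAt).restrictScalars ℝ
  have hdfz : DifferentiableAt ℝ (deriv f) z :=
    (((hfa.deriv) z hz).differentiableAt).restrictScalars ℝ
  have hrz := one_sub_ne hz
  have hrf := one_sub_ne (hmap z hz)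
  have hdenf : DifferentiableAt ℝ (fun w => (1 - f w * (starRingEnd ℂ) (f w))⁻¹) z := by
    exact DifferentiableAt.inv
      ((differentiableAt_const 1).sub (hfz.mul (diffAt_conj_comp hfz))) hrf
  have hφf : φ = fun w => ((1 - w * (starRingEnd ℂ) w) *
      (1 - f w * (starRingEnd ℂ) (f w))⁻¹) * deriv f w := by
    funext w
    rw [hφ w, div_eq_mul_inv, cast_one_sub_abs, cast_one_sub_abs]
  have hdφ : DifferentiableAt ℝ φ z := by
    rw [hφf]
    exact ((diffAt_denom z).mul hdenf).mul hdfz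
  have hdGf : DifferentiableAt ℝ (fun w => GammaZ (f w)) z := by
    simp only [GammaZ_eq]
    exact ((differentiableAt_const _).mul (diffAt_conj_comp hfz)).mul hdenf
  have hdGbf : DifferentiableAt ℝ (fun w => GammaZbar (f w)) z := by
    simp only [GammaZbar_eq]
    exact ((differentiableAt_const _).mul hfz).mul hdenf
  have hdaz : DifferentiableAt ℝ az z := by
    have hfun : az = fun w => GammaZ (f w) * deriv f w - GammaZ w := funext haz
    rw [hfun]
    exact (hdGf.mul hdfz).sub (diffAt_GammaZ hz)
  have hdazbar : DifferentiableAt ℝ azbar z := by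
    have hfun : azbar = fun w => GammaZbar (f w) * (starRingEnd ℂ) (deriv f w) - GammaZbar w :=
      funext hazbar
    rw [hfun]
    exact (hdGbf.mul (diffAt_conj_comp hdfz)).sub (diffAt_GammaZbar hz)
  have hconj_az : az z = (starRingEnd ℂ) (azbar z) := by
    rw [haz z, hazbar z]
    simp only [map_sub, _root_.map_mul, conj_GammaZbar, Complex.conj_conj]
  -- rewrite the gauge potentials
  have hAf' : AfZ = fun w => (az w + GammaZ w) • t0 +
      (((1 : ℂ)/(2*Complex.I)) * (φ w * eZ w)) • tminus := by
    funext w; rw [hAfZ w, smul_smul]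
  have hAfb' : AfZbar = fun w => (azbar w + GammaZbar w) • t0 +
      (-(((1 : ℂ)/(2*Complex.I)) * ((starRingEnd ℂ) (φ w) * eZ w))) • tplus := by
    funext w; rw [hAfZbar w, eBarZbar_eq, smul_smul, sub_eq_add_neg, ← neg_smul]
  have hs1 : wderiv (fun w => azbar w + GammaZbar w) z =
      wderiv azbar z + wderiv GammaZbar z := wd_add hdazbar (diffAt_GammaZbar hz)
  have hs2 : wderiv (fun w => -(((1 : ℂ)/(2*Complex.I)) *
      ((starRingEnd ℂ) (φ w) * eZ w))) z =
      -(((1 : ℂ)/(2*Complex.I)) * ((starRingEnd ℂ) (wderivBar φ z) * eZ z +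
        (starRingEnd ℂ) (φ z) * wderiv eZ z)) := by
    rw [wd_neg, wd_const_mul ((diffAt_conj_comp hdφ).fun_mul (diffAt_eZ hz)),
      wd_mul (diffAt_conj_comp hdφ) (diffAt_eZ hz), wd_conj]
  have hs3 : wderivBar (fun w => az w + GammaZ w) z =
      wderivBar az z + wderivBar GammaZ z := wdb_add hdaz (diffAt_GammaZ hz)
  have hs4 : wderivBar (fun w => ((1 : ℂ)/(2*Complex.I)) * (φ w * eZ w)) z =
      ((1 : ℂ)/(2*Complex.I)) * (wderivBar φ z * eZ z + φ z * wderivBar eZ z) := by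
    rw [wdb_const_mul (hdφ.fun_mul (diffAt_eZ hz)), wdb_mul hdφ (diffAt_eZ hz)]
  have hM1 : mwderiv AfZbar z = (wderiv azbar z + wderiv GammaZbar z) • t0 +
      (-(((1 : ℂ)/(2*Complex.I)) * ((starRingEnd ℂ) (wderivBar φ z) * eZ z +
        (starRingEnd ℂ) (φ z) * wderiv eZ z))) • tplus := by
    rw [hAfb', mwderiv_comb (hdazbar.fun_add (diffAt_GammaZbar hz))
      (((diffAt_conj_comp hdφ).fun_mul (diffAt_eZ hz)).const_mul _).fun_neg, hs1, hs2]
  have hM2 : mwderivBar AfZ z = (wderivBar az z + wderivBar GammaZ z) • t0 +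
      (((1 : ℂ)/(2*Complex.I)) * (wderivBar φ z * eZ z + φ z * wderivBar eZ z)) • tminus := by
    rw [hAf', mwderivBar_comb (hdaz.fun_add (diffAt_GammaZ hz))
      ((hdφ.fun_mul (diffAt_eZ hz)).const_mul _), hs3, hs4]
  rw [hM1, hM2, hAfZ z, hAfZbar z, eBarZbar_eq, hconj_az, cast_abs_sq (φ z),
    eZ_val, GammaZ_val (z := z), GammaZbar_val (z := z), wd_eZ hz, wdb_eZ hz,
    wdb_GammaZ hz, wd_GammaZbar hz]
  have hcI : (1:ℂ)/(2*Complex.I) = -Complex.I/2 := by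
    rw [div_eq_div_iff (by simp [Complex.I_ne_zero]) (two_ne_zero)]
    linear_combination 2*Complex.I_mul_I
  rw [hcI]
  rw [← Matrix.ext_iff]
  simp only [t0_eq, tplus_eq, tminus_eq, Fin.forall_fin_two, Matrix.add_apply,
    Matrix.sub_apply, Matrix.smul_apply, Matrix.mul_apply, Fin.sum_univ_two, smul_eq_mul,
    Matrix.zero_apply, Matrix.of_apply, Matrix.cons_val', Matrix.cons_val_zero,
    Matrix.cons_val_one, Matrix.head_cons, Matrix.head_fin_const, Matrix.empty_val',
    Matrix.cons_val_fin_one]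
  have hrr : (1 - z * (starRingEnd ℂ) z) * (1 - z * (starRingEnd ℂ) z)⁻¹ = 1 :=
    mul_inv_cancel₀ hrz
  set r : ℂ := 1 - z * (starRingEnd ℂ) z with hr
  set R : ℂ := r⁻¹ with hR
  set cz : ℂ := (starRingEnd ℂ) z with hcz
  set p : ℂ := φ z with hp
  set pb : ℂ := (starRingEnd ℂ) p with hpb
  set b : ℂ := azbar z with hb
  set bb : ℂ := (starRingEnd ℂ) b with hbb
  set u : ℂ := wderivBar φ z with hu
  set ub : ℂ := (starRingEnd ℂ) u with hub
  set da : ℂ := wderivBar az z with hda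
  set db : ℂ := wderiv azbar z with hdb
  constructor
  · rintro ⟨⟨h00, h01⟩, h10, h11⟩
    constructor
    · linear_combination r*h10 + (R*u*r - Complex.I*R*p*b*r +
        Complex.I^2*R^2*p*z*r)*Complex.I_mul_I + (-u + Complex.I*p*b)*hrr
    · linear_combination (-2*Complex.I)*h00 + (db - da - 2*Complex.I*R^2 +
        2*Complex.I*R^2*p*pb - 2*Complex.I^3*R^2*p*pb)*Complex.I_mul_I
  · rintro ⟨h1, h2⟩
    have h1c : ub + Complex.I * bb * pb = 0 := by
      have hc := congrArg (starRingEnd ℂ) h1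
      simp only [map_sub, _root_.map_mul, map_zero, Complex.conj_I, ← hub, ← hbb, ← hpb] at hc
      linear_combination hc
    refine ⟨⟨?_, ?_⟩, ?_, ?_⟩
    · linear_combination (Complex.I/2)*h2 + (-Complex.I^2*R^2*p*pb)*Complex.I_mul_I
    · linear_combination (-R)*h1c + (R*ub + Complex.I*R*pb*bb +
        Complex.I^2*R^2*cz*pb)*Complex.I_mul_I
    · linear_combination R*h1 + (-R*u + Complex.I*R*p*b - Complex.I^2*R^2*p*z)*Complex.I_mul_I
    · linear_combination (-(Complex.I/2))*h2 + (Complex.I^2*R^2*p*pb)*Complex.I_mul_I
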